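/- arXiv:math/0608786 — 8 statements merged into one kernel-verified Lean document; each statement's English description precedes it below -/
import Mathlib

section
/- For every real number x with 0 ≤ x ≤ 1, one has arcsin x ≤ π·x / (2 + (π − 2)·√(1 − x²)). (Equivalently, with b₁ = 2/(π−2), arcsin x ≤ ((π/(π−2))·x)/(2/(π−2) + √(1−x²)).) -/
/-!
Put `θ = arcsin x ∈ [0, π/2]`; the inequality becomes `0 ≤ gap θ` with
`gap θ = π sin θ - 2θ - (π - 2) θ cos θ`, which vanishes at `0` and at `π/2`.
The fourth derivative of `gap` is `≤ 0` on `[0, π/2]`, and the third, second and first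
derivatives are `≥ 0` at `0`. A function that is `≥ 0` at the left end and whose derivative is
first `≥ 0` and then `≤ 0` has the same sign pattern itself, so going down the derivatives
`gap` rises and then falls on `[0, π/2]`; being `0` at both ends, it is `≥ 0` in between.
-/

open Real Set

def NonnegThenNonposOn (f : ℝ → ℝ) (a b : ℝ) : Prop :=
  ∃ c ∈ Icc a b, (∀ x ∈ Ioo a c, 0 ≤ f x) ∧ ∀ x ∈ Ioo c b, f x ≤ 0

section SignPattern

variable {f f' : ℝ → ℝ} {a b : ℝ}

theorem AntitoneOn.nonnegThenNonposOn (hf : AntitoneOn f (Icc a b)) (hab : a ≤ b) :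
    NonnegThenNonposOn f a b := by
  -- the sign switches at the first point where `f` is negative, or at `b` if there is none
  set S := insert b {x ∈ Icc a b | f x < 0}
  have hS : BddBelow S := ⟨a, by
    rintro x (rfl | ⟨hx, -⟩)
    exacts [hab, hx.1]⟩
  have hSb : sInf S ≤ b := csInf_le hS (mem_insert _ _)
  refine ⟨sInf S, ⟨le_csInf (insert_nonempty _ _) ?_, hSb⟩, ?_, ?_⟩
  · rintro x (rfl | ⟨hx, -⟩)
    exacts [hab, hx.1]
  · intro x hx
    by_contra! hneg
    exact notMem_of_lt_csInf hx.2 hS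
      (mem_insert_of_mem _ ⟨⟨hx.1.le, hx.2.le.trans hSb⟩, hneg⟩)
  · intro x hx
    obtain ⟨y, hyS, hyx⟩ := exists_lt_of_csInf_lt (insert_nonempty _ _) hx.1
    rcases hyS with rfl | ⟨hy, hfy⟩
    · exact absurd hx.2 hyx.not_gt
    · exact (hf hy ⟨hy.1.trans hyx.le, hx.2.le⟩ hyx.le).trans hfy.le

theorem NonnegThenNonposOn.monotoneOn_antitoneOn (hf' : NonnegThenNonposOn f' a b)
    (hf : ContinuousOn f (Icc a b)) (hd : ∀ x ∈ Ioo a b, HasDerivAt f (f' x) x) :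
    ∃ c ∈ Icc a b, MonotoneOn f (Icc a c) ∧ AntitoneOn f (Icc c b) := by
  obtain ⟨c, hc, hpos, hneg⟩ := hf'
  refine ⟨c, hc, ?_, ?_⟩
  · refine monotoneOn_of_hasDerivWithinAt_nonneg (convex_Icc a c)
      (hf.mono (Icc_subset_Icc_right hc.2)) (fun x hx ↦ ?_) (fun x hx ↦ hpos x ?_)
    all_goals rw [interior_Icc] at hx
    · exact (hd x ⟨hx.1, hx.2.trans_le hc.2⟩).hasDerivWithinAt
    · exact hx
  · refine antitoneOn_of_hasDerivWithinAt_nonpos (convex_Icc c b)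
      (hf.mono (Icc_subset_Icc_left hc.1)) (fun x hx ↦ ?_) (fun x hx ↦ hneg x ?_)
    all_goals rw [interior_Icc] at hx
    · exact (hd x ⟨hc.1.trans_lt hx.1, hx.2⟩).hasDerivWithinAt
    · exact hx

theorem NonnegThenNonposOn.of_hasDerivAt (hf' : NonnegThenNonposOn f' a b)
    (hf : ContinuousOn f (Icc a b)) (hd : ∀ x ∈ Ioo a b, HasDerivAt f (f' x) x)
    (ha : 0 ≤ f a) : NonnegThenNonposOn f a b := by
  obtain ⟨c, hc, hmono, hanti⟩ := hf'.monotoneOn_antitoneOn hf hd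
  obtain ⟨d, hdI, hposd, hnegd⟩ := hanti.nonnegThenNonposOn hc.2
  refine ⟨d, ⟨hc.1.trans hdI.1, hdI.2⟩, fun x hx ↦ ?_, hnegd⟩
  rcases le_or_gt x c with hxc | hcx
  · exact ha.trans (hmono ⟨le_rfl, hc.1⟩ ⟨hx.1.le, hxc⟩ hx.1.le)
  · exact hposd x ⟨hcx, hx.2⟩

theorem NonnegThenNonposOn.nonneg_of_hasDerivAt (hf' : NonnegThenNonposOn f' a b)
    (hf : ContinuousOn f (Icc a b)) (hd : ∀ x ∈ Ioo a b, HasDerivAt f (f' x) x) (ha : 0 ≤ f a)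
    (hb : 0 ≤ f b) {x : ℝ} (hx : x ∈ Icc a b) : 0 ≤ f x := by
  obtain ⟨c, hc, hmono, hanti⟩ := hf'.monotoneOn_antitoneOn hf hd
  rcases le_total x c with hxc | hcx
  · exact ha.trans (hmono ⟨le_rfl, hc.1⟩ ⟨hx.1, hxc⟩ hx.1)
  · exact hb.trans (hanti ⟨hcx, hx.2⟩ ⟨hc.2, le_rfl⟩ hx.2)

end SignPattern

namespace Fink

noncomputable def gap (θ : ℝ) : ℝ := π * sin θ - 2 * θ - (π - 2) * θ * cos θ
noncomputable def gap₁ (θ : ℝ) : ℝ := 2 * cos θ - 2 + (π - 2) * θ * sin θ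
noncomputable def gap₂ (θ : ℝ) : ℝ := (π - 4) * sin θ + (π - 2) * θ * cos θ
noncomputable def gap₃ (θ : ℝ) : ℝ := (2 * π - 6) * cos θ - (π - 2) * θ * sin θ
noncomputable def gap₄ (θ : ℝ) : ℝ := -(3 * π - 8) * sin θ - (π - 2) * θ * cos θ

theorem hasDerivAt_gap (θ : ℝ) : HasDerivAt gap (gap₁ θ) θ :=
  ((((hasDerivAt_sin θ).const_mul π).sub ((hasDerivAt_id θ).const_mul 2)).sub
    (((hasDerivAt_id θ).const_mul (π - 2)).mul (hasDerivAt_cos θ)))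
    |>.congr_deriv (by simp only [gap₁, id_eq]; ring)

theorem hasDerivAt_gap₁ (θ : ℝ) : HasDerivAt gap₁ (gap₂ θ) θ :=
  ((((hasDerivAt_cos θ).const_mul 2).sub_const 2).add
    (((hasDerivAt_id θ).const_mul (π - 2)).mul (hasDerivAt_sin θ)))
    |>.congr_deriv (by simp only [gap₂, id_eq]; ring)

theorem hasDerivAt_gap₂ (θ : ℝ) : HasDerivAt gap₂ (gap₃ θ) θ :=
  (((hasDerivAt_sin θ).const_mul (π - 4)).add
    (((hasDerivAt_id θ).const_mul (π - 2)).mul (hasDerivAt_cos θ)))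
    |>.congr_deriv (by simp only [gap₃, id_eq]; ring)

theorem hasDerivAt_gap₃ (θ : ℝ) : HasDerivAt gap₃ (gap₄ θ) θ :=
  (((hasDerivAt_cos θ).const_mul (2 * π - 6)).sub
    (((hasDerivAt_id θ).const_mul (π - 2)).mul (hasDerivAt_sin θ)))
    |>.congr_deriv (by simp only [gap₄, id_eq]; ring)

theorem gap₄_nonpos {θ : ℝ} (hθ : θ ∈ Icc 0 (π / 2)) : gap₄ θ ≤ 0 := by
  have hsin : 0 ≤ sin θ := sin_nonneg_of_nonneg_of_le_pi hθ.1 (by linarith [hθ.2, pi_pos])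
  have hcos : 0 ≤ cos θ := cos_nonneg_of_mem_Icc ⟨by linarith [hθ.1, pi_pos], hθ.2⟩
  have hπ := pi_gt_three
  have hsin_term := mul_nonneg (by linarith : (0 : ℝ) ≤ 3 * π - 8) hsin
  have hcos_term := mul_nonneg (mul_nonneg (by linarith : (0 : ℝ) ≤ π - 2) hθ.1) hcos
  unfold gap₄
  linarith

theorem nonnegThenNonposOn_gap₃ : NonnegThenNonposOn gap₃ 0 (π / 2) :=
  have hgap₄ : NonnegThenNonposOn gap₄ 0 (π / 2) :=
    ⟨0, ⟨le_rfl, by positivity⟩, by simp, fun θ hθ ↦ gap₄_nonpos (Ioo_subset_Icc_self hθ)⟩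
  hgap₄.of_hasDerivAt (HasDerivAt.continuousOn fun θ _ ↦ hasDerivAt_gap₃ θ)
    (fun θ _ ↦ hasDerivAt_gap₃ θ) (by simp [gap₃]; linarith [pi_gt_three])

theorem nonnegThenNonposOn_gap₂ : NonnegThenNonposOn gap₂ 0 (π / 2) :=
  nonnegThenNonposOn_gap₃.of_hasDerivAt
    (HasDerivAt.continuousOn fun θ _ ↦ hasDerivAt_gap₂ θ) (fun θ _ ↦ hasDerivAt_gap₂ θ)
    (by simp [gap₂])

theorem nonnegThenNonposOn_gap₁ : NonnegThenNonposOn gap₁ 0 (π / 2) :=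
  nonnegThenNonposOn_gap₂.of_hasDerivAt
    (HasDerivAt.continuousOn fun θ _ ↦ hasDerivAt_gap₁ θ) (fun θ _ ↦ hasDerivAt_gap₁ θ)
    (by simp [gap₁])

theorem gap_nonneg {θ : ℝ} (hθ : θ ∈ Icc 0 (π / 2)) : 0 ≤ gap θ :=
  nonnegThenNonposOn_gap₁.nonneg_of_hasDerivAt
    (HasDerivAt.continuousOn fun θ _ ↦ hasDerivAt_gap θ) (fun θ _ ↦ hasDerivAt_gap θ)
    (by simp [gap]) (by simp [gap]; linarith) hθ

end Fink

theorem improved_fink_inequality (x : ℝ) (h0 : 0 ≤ x) (h1 : x ≤ 1) :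
    Real.arcsin x ≤ π * x / (2 + (π - 2) * Real.sqrt (1 - x ^ 2)) := by
  have hgap := Fink.gap_nonneg ⟨arcsin_nonneg.2 h0, arcsin_le_pi_div_two x⟩
  rw [Fink.gap, sin_arcsin (by linarith) h1, cos_arcsin] at hgap
  have hπ : 0 < π - 2 := by linarith [pi_gt_three]
  rw [le_div_iff₀ (by positivity)]
  linarith
end

section
/- For every real number x with 0 < x < 1, one has arcsin x < π·x / (2 + (π − 2)·√(1 − x²)); moreover equality holds in arcsin x ≤ π·x / (2 + (π − 2)·√(1 − x²)) exactly at x = 0 and x = 1. -/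
/-!
Put `θ = arcsin x ∈ (0, π/2)` and `p = π - 2`. The claim becomes `0 < h θ` for
`h θ = π sin θ / (2 + p cos θ) - θ`, which vanishes at `0` and at `π/2`. Since
`π (2 cos θ + p) - (2 + p cos θ)² = (1 - cos θ) (p² cos θ + π p - 4)`, the sign of `h'` is that of
`p² cos θ + π p - 4`, which is decreasing in `θ`: `h` first increases and then decreases, so it
is positive strictly between its two zeros.
-/

open Real Set

noncomputable def finkGap (θ : ℝ) : ℝ := π * sin θ / (2 + (π - 2) * cos θ) - θ

lemma fink_denom_pos {θ : ℝ} (hθ : 0 ≤ cos θ) : 0 < 2 + (π - 2) * cos θ := by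
  have : 0 < π - 2 := by linarith [pi_gt_three]
  positivity

lemma hasDerivAt_finkGap {θ : ℝ} (hθ : 2 + (π - 2) * cos θ ≠ 0) :
    HasDerivAt finkGap
      ((1 - cos θ) * ((π - 2) ^ 2 * cos θ + π * (π - 2) - 4) / (2 + (π - 2) * cos θ) ^ 2) θ := by
  have hquot := ((hasDerivAt_sin θ).const_mul π).div
    (((hasDerivAt_cos θ).const_mul (π - 2)).const_add 2) hθ
  refine (hquot.sub (hasDerivAt_id θ)).congr_deriv ?_
  rw [div_sub_one (pow_ne_zero 2 hθ)]
  congr 1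
  linear_combination π * (π - 2) * sin_sq_add_cos_sq θ

lemma finkGap_zero : finkGap 0 = 0 := by simp [finkGap]

lemma finkGap_pi_div_two : finkGap (π / 2) = 0 := by simp [finkGap]

lemma continuousOn_finkGap : ContinuousOn finkGap (Icc 0 (π / 2)) := fun θ hθ =>
  (hasDerivAt_finkGap (fink_denom_pos (cos_nonneg_of_mem_Icc
    ⟨by linarith [hθ.1, pi_pos], hθ.2⟩)).ne').continuousAt.continuousWithinAt

lemma deriv_finkGap_eq_pos_mul {θ : ℝ} (hθ : θ ∈ Ioo 0 (π / 2)) :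
    ∃ d > 0, deriv finkGap θ = d * ((π - 2) ^ 2 * cos θ + π * (π - 2) - 4) := by
  have hcos : 0 < cos θ := cos_pos_of_mem_Ioo ⟨by linarith [hθ.1, pi_pos], hθ.2⟩
  have hcos1 : cos θ < 1 := by
    simpa using strictAntiOn_cos ⟨le_rfl, pi_pos.le⟩ ⟨hθ.1.le, by linarith [hθ.2, pi_pos]⟩ hθ.1
  have hden := fink_denom_pos hcos.le
  refine ⟨(1 - cos θ) / (2 + (π - 2) * cos θ) ^ 2, by bound, ?_⟩
  rw [(hasDerivAt_finkGap hden.ne').deriv]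
  ring

lemma finkGap_pos {θ : ℝ} (hθ : θ ∈ Ioo 0 (π / 2)) : 0 < finkGap θ := by
  have hcos_lt {s t : ℝ} (hs : 0 ≤ s) (hst : s < t) (ht : t ≤ π / 2) : cos t < cos s :=
    strictAntiOn_cos ⟨hs, by linarith [pi_pos]⟩ ⟨hs.trans hst.le, by linarith [pi_pos]⟩ hst
  have hp : 0 < (π - 2) ^ 2 := by nlinarith [pi_gt_three]
  by_cases hθc : 4 ≤ (π - 2) ^ 2 * cos θ + π * (π - 2)
  · have hmono : StrictMonoOn finkGap (Icc 0 θ) := by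
      refine strictMonoOn_of_deriv_pos (convex_Icc 0 θ)
        (continuousOn_finkGap.mono (Icc_subset_Icc_right hθ.2.le)) fun s hs => ?_
      rw [interior_Icc] at hs
      obtain ⟨d, hd, hds⟩ := deriv_finkGap_eq_pos_mul ⟨hs.1, hs.2.trans hθ.2⟩
      have := hcos_lt hs.1.le hs.2 hθ.2.le
      rw [hds]
      exact mul_pos hd (by nlinarith)
    simpa [finkGap_zero] using hmono (left_mem_Icc.2 hθ.1.le) (right_mem_Icc.2 hθ.1.le) hθ.1
  · have hanti : StrictAntiOn finkGap (Icc θ (π / 2)) := by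
      refine strictAntiOn_of_deriv_neg (convex_Icc θ (π / 2))
        (continuousOn_finkGap.mono (Icc_subset_Icc_left hθ.1.le)) fun s hs => ?_
      rw [interior_Icc] at hs
      obtain ⟨d, hd, hds⟩ := deriv_finkGap_eq_pos_mul ⟨hθ.1.trans hs.1, hs.2⟩
      have := hcos_lt hθ.1.le hs.1 hs.2.le
      rw [hds]
      exact mul_neg_of_pos_of_neg hd (by nlinarith)
    simpa [finkGap_pi_div_two] using
      hanti (left_mem_Icc.2 hθ.2.le) (right_mem_Icc.2 hθ.2.le) hθ.2

theorem arcsin_lt_fink {x : ℝ} (hx₀ : 0 < x) (hx₁ : x < 1) :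
    arcsin x < π * x / (2 + (π - 2) * √(1 - x ^ 2)) := by
  have hgap := finkGap_pos ⟨arcsin_pos.2 hx₀, arcsin_lt_pi_div_two.2 hx₁⟩
  rwa [finkGap, sin_arcsin (by linarith) hx₁.le, cos_arcsin, sub_pos] at hgap

theorem improved_fink_strict_and_equality_cases :
    (∀ x : ℝ, 0 < x → x < 1 →
      Real.arcsin x < π * x / (2 + (π - 2) * Real.sqrt (1 - x ^ 2))) ∧
    (∀ x : ℝ, 0 ≤ x → x ≤ 1 →
      (Real.arcsin x = π * x / (2 + (π - 2) * Real.sqrt (1 - x ^ 2)) ↔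
        x = 0 ∨ x = 1)) := by
  refine ⟨fun x => arcsin_lt_fink, fun x hx₀ hx₁ => ⟨fun heq => ?_, ?_⟩⟩
  · by_contra! hx
    exact (arcsin_lt_fink (hx₀.lt_of_ne' hx.1) (hx₁.lt_of_ne hx.2)).ne heq
  · rintro (rfl | rfl)
    · simp
    · norm_num
end

section
/- (Shafer's inequality) For every real number x with 0 ≤ x ≤ 1, one has 3x/(2 + √(1 − x²)) ≤ arcsin x, with equality only for x = 0; i.e. the inequality is strict for 0 < x ≤ 1. -/
/-!
Put `θ = arcsin x`, so that `x = sin θ` and `√(1 - x²) = cos θ`; the claim becomes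
`3 sin θ / (2 + cos θ) < θ` for `θ > 0`. The function `θ - 3 sin θ / (2 + cos θ)` vanishes at `0`
and has derivative `(1 - cos θ)² / (2 + cos θ)²`, which is positive on `(0, π)`. Beyond `π` the
quotient is at most `3 < π`.
-/

open Real

lemma hasDerivAt_sub_three_mul_sin_div_two_add_cos (t : ℝ) :
    HasDerivAt (fun s => s - 3 * sin s / (2 + cos s)) ((1 - cos t) ^ 2 / (2 + cos t) ^ 2) t := by
  have hc : 2 + cos t ≠ 0 := by linarith [neg_one_le_cos t]
  refine ((hasDerivAt_id' t).sub
    (((hasDerivAt_sin t).const_mul 3).div ((hasDerivAt_cos t).const_add 2) hc)).congr_deriv ?_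
  field_simp
  linear_combination -3 * sin_sq_add_cos_sq t

lemma strictMonoOn_sub_three_mul_sin_div_two_add_cos :
    StrictMonoOn (fun s => s - 3 * sin s / (2 + cos s)) (Set.Icc 0 π) := by
  refine strictMonoOn_of_deriv_pos (convex_Icc 0 π) (fun t _ =>
    (hasDerivAt_sub_three_mul_sin_div_two_add_cos t).continuousAt.continuousWithinAt) ?_
  rw [interior_Icc]
  rintro t ⟨ht0, htπ⟩
  rw [(hasDerivAt_sub_three_mul_sin_div_two_add_cos t).deriv]
  have hcos : cos t < 1 := by
    simpa using cos_lt_cos_of_nonneg_of_le_pi le_rfl htπ.le ht0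
  have hc : 0 < 2 + cos t := by linarith [neg_one_le_cos t]
  exact div_pos (pow_pos (by linarith) 2) (pow_pos hc 2)

lemma three_mul_sin_div_two_add_cos_lt {θ : ℝ} (hθ : 0 < θ) : 3 * sin θ / (2 + cos θ) < θ := by
  rcases le_or_gt θ π with hθπ | hπθ
  · have := strictMonoOn_sub_three_mul_sin_div_two_add_cos
      (Set.left_mem_Icc.2 pi_pos.le) ⟨hθ.le, hθπ⟩ hθ
    simp only [sin_zero, cos_zero, mul_zero, zero_div, sub_zero] at this
    linarith
  · have hle : 3 * sin θ / (2 + cos θ) ≤ 3 := by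
      rw [div_le_iff₀ (by linarith [neg_one_le_cos θ])]
      linarith [sin_le_one θ, neg_one_le_cos θ]
    linarith [pi_gt_three]

theorem shafer_inequality (x : ℝ) (h0 : 0 ≤ x) (h1 : x ≤ 1) :
    3 * x / (2 + Real.sqrt (1 - x ^ 2)) ≤ Real.arcsin x ∧
    (0 < x → 3 * x / (2 + Real.sqrt (1 - x ^ 2)) < Real.arcsin x) := by
  have hsin : sin (arcsin x) = x := sin_arcsin (by linarith) h1
  have strict : 0 < x → 3 * x / (2 + √(1 - x ^ 2)) < arcsin x := fun hx => by
    simpa only [hsin, cos_arcsin] using three_mul_sin_div_two_add_cos_lt (arcsin_pos.2 hx)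
  refine ⟨?_, strict⟩
  rcases h0.eq_or_lt with rfl | hx
  · simp
  · exact (strict hx).le
end

section
/- (Fink's inequality) For every real number x with 0 ≤ x ≤ 1, one has arcsin x ≤ π·x/(2 + √(1 − x²)). -/
/-! Put `x = sin θ` with `θ ∈ [0, π/2]`, so that `√(1 - x²) = cos θ`; the claim becomes
`θ (2 + cos θ) ≤ π sin θ`. The difference `g θ = π sin θ - θ (2 + cos θ)` vanishes at both
endpoints, and `g'' θ = (2 - π) sin θ + θ cos θ ≤ 0` because `θ cos θ ≤ sin θ` (that is,
`θ ≤ tan θ`) and `π - 2 > 1`. Hence `g` is concave, so it is nonnegative between its zeros. -/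

open Real Set

lemma mul_cos_le_sin {θ : ℝ} (h0 : 0 ≤ θ) (h1 : θ < π / 2) : θ * cos θ ≤ sin θ := by
  have hcos : 0 < cos θ := cos_pos_of_mem_Ioo ⟨by linarith [pi_pos], h1⟩
  have htan := le_tan h0 h1
  rwa [tan_eq_sin_div_cos, le_div_iff₀ hcos] at htan

lemma concaveOn_pi_mul_sin_sub_mul_two_add_cos :
    ConcaveOn ℝ (Icc 0 (π / 2)) (fun θ ↦ π * sin θ - θ * (2 + cos θ)) := by
  have hderiv (θ : ℝ) : HasDerivAt (fun θ ↦ π * sin θ - θ * (2 + cos θ))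
      (π * cos θ - (2 + cos θ) + θ * sin θ) θ := by
    exact (((hasDerivAt_sin θ).const_mul π).sub
      ((hasDerivAt_id' θ).mul ((hasDerivAt_cos θ).const_add 2))).congr_deriv (by ring)
  have hderiv2 (θ : ℝ) : HasDerivAt (fun θ ↦ π * cos θ - (2 + cos θ) + θ * sin θ)
      ((2 - π) * sin θ + θ * cos θ) θ := by
    exact ((((hasDerivAt_cos θ).const_mul π).sub ((hasDerivAt_cos θ).const_add 2)).add
      ((hasDerivAt_id' θ).mul (hasDerivAt_sin θ))).congr_deriv (by ring)
  refine concaveOn_of_hasDerivWithinAt2_nonpos (convex_Icc _ _) (by fun_prop)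
    (fun θ _ ↦ (hderiv θ).hasDerivWithinAt) (fun θ _ ↦ (hderiv2 θ).hasDerivWithinAt) ?_
  intro θ hθ
  rw [interior_Icc] at hθ
  obtain ⟨h0, h1⟩ := hθ
  have hsin : 0 ≤ sin θ := sin_nonneg_of_nonneg_of_le_pi h0.le (by linarith [pi_pos])
  nlinarith [mul_cos_le_sin h0.le h1, pi_gt_three]

lemma mul_two_add_cos_le_pi_mul_sin {θ : ℝ} (hθ : θ ∈ Icc 0 (π / 2)) :
    θ * (2 + cos θ) ≤ π * sin θ := by
  have hpi : 0 ≤ π / 2 := by positivity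
  have hmin := concaveOn_pi_mul_sin_sub_mul_two_add_cos.min_le_of_mem_Icc
    (left_mem_Icc.2 hpi) (right_mem_Icc.2 hpi) hθ
  norm_num at hmin
  linarith

theorem fink_inequality (x : ℝ) (h0 : 0 ≤ x) (h1 : x ≤ 1) :
    Real.arcsin x ≤ π * x / (2 + Real.sqrt (1 - x ^ 2)) := by
  have key := mul_two_add_cos_le_pi_mul_sin
    ⟨arcsin_nonneg.2 h0, arcsin_le_pi_div_two x⟩
  rw [sin_arcsin (by linarith) h1, cos_arcsin] at key
  rwa [le_div_iff₀ (by positivity)]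
end

section
/- (Generalized Shafer lower bound) For every real parameter b ≥ 2 and every real x with 0 ≤ x ≤ 1, one has (b+1)x/(b + √(1−x²)) ≤ arcsin x. -/
/-!
Put `θ = arcsin x ∈ [0, π/2]`, so that `x = sin θ` and `√(1 - x²) = cos θ`; the claim becomes
`(b + 1) sin θ ≤ θ (b + cos θ)`. The difference `θ (b + cos θ) - (b + 1) sin θ` vanishes at `0`
and has derivative `b (1 - cos θ) - θ sin θ`, which is nonnegative for `b ≥ 2` because
`θ sin θ ≤ 2 (1 - cos θ)`: by the half-angle formulas this is `s cos s ≤ sin s` for `s = θ / 2`.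
-/

open Real Set

namespace Real

lemma mul_cos_le_sin {x : ℝ} (hx₀ : 0 ≤ x) (hx : x ≤ π) : x * cos x ≤ sin x := by
  have hsin : 0 ≤ sin x := sin_nonneg_of_nonneg_of_le_pi hx₀ hx
  rcases lt_or_ge x (π / 2) with hlt | hge
  · have hcos : 0 < cos x := cos_pos_of_mem_Ioo ⟨by linarith [pi_pos], hlt⟩
    have htan := le_tan hx₀ hlt
    rwa [tan_eq_sin_div_cos, le_div_iff₀ hcos] at htan
  · have hcos : cos x ≤ 0 := cos_nonpos_of_pi_div_two_le_of_le hge (by linarith)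
    nlinarith

lemma mul_sin_le_two_mul_one_sub_cos {t : ℝ} (ht₀ : 0 ≤ t) (ht : t ≤ 2 * π) :
    t * sin t ≤ 2 * (1 - cos t) := by
  obtain ⟨s, rfl⟩ : ∃ s, t = 2 * s := ⟨t / 2, by ring⟩
  have hs₀ : 0 ≤ s := by linarith
  have hs : s ≤ π := by linarith
  have hsin : 0 ≤ sin s := sin_nonneg_of_nonneg_of_le_pi hs₀ hs
  have hcos_half := mul_cos_le_sin hs₀ hs
  calc 2 * s * sin (2 * s) = 4 * sin s * (s * cos s) := by rw [sin_two_mul]; ring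
    _ ≤ 4 * sin s * sin s := by gcongr
    _ = 2 * (1 - cos (2 * s)) := by rw [cos_two_mul, cos_sq']; ring

lemma add_one_mul_sin_le_mul_add_cos {b θ : ℝ} (hb : 2 ≤ b) (hθ₀ : 0 ≤ θ) (hθ : θ ≤ 2 * π) :
    (b + 1) * sin θ ≤ θ * (b + cos θ) := by
  let g : ℝ → ℝ := fun t ↦ t * (b + cos t) - (b + 1) * sin t
  have hg' (t : ℝ) : HasDerivAt g (b * (1 - cos t) - t * sin t) t :=
    (((hasDerivAt_id' t).mul ((hasDerivAt_cos t).const_add b)).sub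
      ((hasDerivAt_sin t).const_mul (b + 1))).congr_deriv (by ring)
  have hmono : MonotoneOn g (Icc 0 (2 * π)) := by
    refine monotoneOn_of_hasDerivWithinAt_nonneg (convex_Icc _ _)
      (fun t _ ↦ (hg' t).continuousAt.continuousWithinAt) (fun t _ ↦ (hg' t).hasDerivWithinAt)
      fun t ht ↦ ?_
    rw [interior_Icc] at ht
    have hkey := mul_sin_le_two_mul_one_sub_cos ht.1.le ht.2.le
    nlinarith [cos_le_one t]
  have hg0θ : g 0 ≤ g θ := hmono ⟨le_rfl, by positivity⟩ ⟨hθ₀, hθ⟩ hθ₀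
  simp only [g, zero_mul, sin_zero, mul_zero, sub_zero] at hg0θ
  linarith

end Real

theorem generalized_shafer_lower_bound (b x : ℝ) (hb : 2 ≤ b)
    (hx0 : 0 ≤ x) (hx1 : x ≤ 1) :
    (b + 1) * x / (b + Real.sqrt (1 - x ^ 2)) ≤ Real.arcsin x := by
  have hden : 0 < b + √(1 - x ^ 2) := by positivity
  have hθ := add_one_mul_sin_le_mul_add_cos hb (arcsin_nonneg.mpr hx0)
    ((arcsin_le_pi_div_two x).trans (by linarith [pi_pos]))
  rw [sin_arcsin (by linarith) hx1, cos_arcsin] at hθ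
  rwa [div_le_iff₀ hden]
end

section
/- For every real parameter b with 2/(π−2) < b < 2, there exists a real number x with 0 < x < 1 such that (b+1)x/(b + √(1−x²)) = arcsin x; that is, the difference function h_b(x) = f_b(x) − arcsin x has a root in the open interval (0,1). -/
/-!
Substituting `x = sin θ` with `θ ∈ (0, π/2)` turns `√(1 - x²)` into `cos θ` and `arcsin x` into `θ`,
so it suffices to find a root of `g θ = (b + 1) sin θ - θ (b + cos θ)` in `(0, π/2)`.
Near `0` we have `g θ = (2 - b) θ³ / 6 + O(θ⁵)`, positive because `b < 2`, while
`g (π/2) = b + 1 - b π / 2` is negative because `b > 2 / (π - 2)`; the intermediate value theorem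
finishes the proof.
-/

open Real

lemma mul_add_cos_lt_add_one_mul_sin {b θ : ℝ} (hb : -1 ≤ b) (hθ₀ : 0 < θ) (hθ₁ : θ ≤ 1)
    (hθb : θ ≤ 2 - b) : θ * (b + cos θ) < (b + 1) * sin θ := by
  have hsin : θ - θ ^ 3 / 6 ≤ sin θ := sin_ge_sub_cube hθ₀.le
  have hcos : cos θ ≤ 1 - θ ^ 2 / 2 + θ ^ 4 * (5 / 96) := by
    have h := cos_bound (x := θ) (by rwa [abs_of_pos hθ₀])
    rw [abs_of_pos hθ₀] at h
    linarith [(abs_le.1 h).2]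
  calc θ * (b + cos θ) ≤ θ * (b + 1 - θ ^ 2 / 2 + θ ^ 4 * (5 / 96)) :=
        mul_le_mul_of_nonneg_left (by linarith) hθ₀.le
    _ < (b + 1) * (θ - θ ^ 3 / 6) := by
      -- the gap is `θ³ ((2 - b) / 6 - 5 θ² / 96)`, and `θ² ≤ 2 - b`
      have hθ3 : 0 < θ ^ 3 := by positivity
      nlinarith [mul_le_mul_of_nonneg_left (mul_le_mul hθ₁ hθb hθ₀.le zero_le_one) hθ3.le]
    _ ≤ (b + 1) * sin θ := by gcongr; linarith

lemma add_one_mul_sin_pi_div_two_lt {b : ℝ} (hb : 2 / (π - 2) < b) :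
    (b + 1) * sin (π / 2) < π / 2 * (b + cos (π / 2)) := by
  rw [div_lt_iff₀ (by linarith [pi_gt_three])] at hb
  rw [sin_pi_div_two, cos_pi_div_two]
  linarith

lemma exists_add_one_mul_sin_eq_mul_add_cos {b : ℝ} (hb₁ : 2 / (π - 2) < b) (hb₂ : b < 2) :
    ∃ θ ∈ Set.Ioo 0 (π / 2), (b + 1) * sin θ = θ * (b + cos θ) := by
  have hb_one : 1 < b := by
    refine lt_of_le_of_lt ?_ hb₁
    rw [le_div_iff₀ (by linarith [pi_gt_three])]
    linarith [pi_lt_four]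
  have hθ₀ : 2 - b ≤ π / 2 := by linarith [pi_gt_three]
  have hcont : ContinuousOn (fun θ => (b + 1) * sin θ - θ * (b + cos θ))
      (Set.Icc (2 - b) (π / 2)) := by
    fun_prop
  obtain ⟨θ, hθ, hroot⟩ := intermediate_value_Ioo' hθ₀ hcont
    ⟨sub_neg.2 (add_one_mul_sin_pi_div_two_lt hb₁),
      sub_pos.2 (mul_add_cos_lt_add_one_mul_sin (by linarith) (by linarith) (by linarith) le_rfl)⟩
  exact ⟨θ, ⟨by linarith [hθ.1], hθ.2⟩, sub_eq_zero.1 hroot⟩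

theorem h_has_root_in_open_interval (b : ℝ) (hb₁ : 2 / (π - 2) < b) (hb₂ : b < 2) :
    ∃ x : ℝ, 0 < x ∧ x < 1 ∧
      (b + 1) * x / (b + Real.sqrt (1 - x ^ 2)) = Real.arcsin x := by
  obtain ⟨θ, ⟨hθ₀, hθ₁⟩, hroot⟩ := exists_add_one_mul_sin_eq_mul_add_cos hb₁ hb₂
  have harcsin : arcsin (sin θ) = θ := arcsin_sin (by linarith) hθ₁.le
  have hsqrt : √(1 - sin θ ^ 2) = cos θ := by rw [← cos_arcsin, harcsin]
  have hden : 0 < b + cos θ := by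
    have := cos_nonneg_of_mem_Icc ⟨by linarith, hθ₁.le⟩
    have : 0 < 2 / (π - 2) := div_pos two_pos (by linarith [pi_gt_three])
    linarith
  refine ⟨sin θ, sin_pos_of_pos_of_lt_pi hθ₀ (by linarith), ?_, ?_⟩
  · simpa using sin_lt_sin_of_lt_of_le_pi_div_two (by linarith) le_rfl hθ₁
  · rw [hsqrt, harcsin, div_eq_iff hden.ne', hroot]
end

section
/- (Optimality of the lower bound within the family) For every real parameter b with 0 < b < 2, there exists a real number x with 0 < x ≤ 1 such that (b+1)x/(b + √(1−x²)) > arcsin x; hence b = 2 gives the greatest lower bound of arcsin among the functions f_b with f_b ≤ arcsin on [0,1]. -/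
/-! Put `x = sin θ`, so that `arcsin x = θ` and `√(1 - x²) = cos θ`; the claim becomes
`θ (b + cos θ) < (b + 1) sin θ`. By Taylor, the left side is `(b + 1) θ - θ³/2 + O(θ⁵)` and the
right side is `(b + 1) θ - (b + 1) θ³/6 + O(θ⁵)`, so the claim holds for small `θ` exactly when
`(b + 1)/6 < 1/2`, i.e. `b < 2`. The explicit bounds `sin θ > θ - θ³/6` and
`cos θ ≤ 1 - θ²/2 + 5θ⁴/96` (for `|θ| ≤ 1`) make "small" quantitative: `5 θ² ≤ 16 (2 - b)`. -/

open Real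

theorem mul_add_cos_lt_mul_sin {b θ : ℝ} (hb : -1 < b) (hθ₀ : 0 < θ) (hθ₁ : θ ≤ 1)
    (hθb : 5 * θ ^ 2 ≤ 16 * (2 - b)) : θ * (b + cos θ) < (b + 1) * sin θ := by
  have hsin : θ - θ ^ 3 / 6 < sin θ := sin_gt_sub_cube hθ₀
  have hcos : cos θ ≤ 1 - θ ^ 2 / 2 + θ ^ 4 * (5 / 96) := by
    have h := cos_bound (x := θ) (by rw [abs_of_pos hθ₀]; exact hθ₁)
    rw [abs_of_pos hθ₀] at h
    linarith [le_abs_self (cos θ - (1 - θ ^ 2 / 2))]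
  calc θ * (b + cos θ) ≤ θ * (b + (1 - θ ^ 2 / 2 + θ ^ 4 * (5 / 96))) := by gcongr
    _ ≤ (b + 1) * (θ - θ ^ 3 / 6) := by nlinarith [pow_pos hθ₀ 3]
    _ < (b + 1) * sin θ := by gcongr; linarith

theorem lower_bound_optimality (b : ℝ) (hb₀ : 0 < b) (hb₂ : b < 2) :
    ∃ x : ℝ, 0 < x ∧ x ≤ 1 ∧
      Real.arcsin x < (b + 1) * x / (b + Real.sqrt (1 - x ^ 2)) := by
  set θ := min 1 (2 - b)
  have hθ₀ : 0 < θ := lt_min one_pos (by linarith)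
  have hθ₁ : θ ≤ 1 := min_le_left _ _
  have hθb : 5 * θ ^ 2 ≤ 16 * (2 - b) := by
    nlinarith [min_le_right 1 (2 - b)]
  have hθπ : θ ≤ π / 2 := hθ₁.trans (by linarith [pi_gt_three])
  refine ⟨sin θ, sin_pos_of_pos_of_lt_pi hθ₀ (by linarith), sin_le_one θ, ?_⟩
  have hcos : 0 ≤ cos θ := cos_nonneg_of_mem_Icc ⟨by linarith, hθπ⟩
  rw [← cos_eq_sqrt_one_sub_sin_sq (by linarith) hθπ, arcsin_sin (by linarith) hθπ,
    lt_div_iff₀ (by positivity)]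
  exact mul_add_cos_lt_mul_sin (by linarith) hθ₀ hθ₁ hθb
end

section
/- Let b₁ = 2/(π−2) and d₁ = √(−b₁⁴ + 2b₁³ + b₁² − 2b₁). Then 0 < d₁ < 1, and the function h_{b₁}(x) = (b₁+1)x/(b₁ + √(1−x²)) − arcsin x attains its maximum over [0,1] at x = d₁; that is, for all x ∈ [0,1], h_{b₁}(x) ≤ h_{b₁}(d₁). -/
/-!
Writing `u = √(1 - x²)`, the derivative of `h_b` on `(-1, 1)` factors as
`(1 - u) (u - c) / (u (b + u)²)` with `c = b² - b - 1`. When `0 < c < 1` the only sign change on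
`(0, 1)` is where `u = c`, i.e. at `x = √(1 - c²)`, so `h_b` increases up to this point and
decreases after it. For `b₁ = 2/(π - 2)` one has `c ∈ (0, 1)` because `3 < π < 3.2`, and
`-b₁⁴ + 2b₁³ + b₁² - 2b₁ = 1 - c²`.
-/

open Real Set

/-- The function `h_b` of the paper. -/
noncomputable def arcsinGap (b x : ℝ) : ℝ :=
  (b + 1) * x / (b + √(1 - x ^ 2)) - arcsin x

section arcsinGap

variable {b : ℝ}

theorem continuous_arcsinGap (hb : 0 < b) : Continuous (arcsinGap b) := by
  refine Continuous.sub ?_ continuous_arcsin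
  refine Continuous.div (by fun_prop) (by fun_prop) fun x => ?_
  exact (add_pos_of_pos_of_nonneg hb (sqrt_nonneg _)).ne'

theorem hasDerivAt_arcsinGap (hb : 0 < b) {x : ℝ} (hx₀ : -1 < x) (hx₁ : x < 1) :
    HasDerivAt (arcsinGap b)
      ((1 - √(1 - x ^ 2)) * (√(1 - x ^ 2) - (b ^ 2 - b - 1)) /
        (√(1 - x ^ 2) * (b + √(1 - x ^ 2)) ^ 2)) x := by
  have hx : 0 < 1 - x ^ 2 := by nlinarith
  set u := √(1 - x ^ 2)
  have hu : 0 < u := sqrt_pos.2 hx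
  have hu_sq : x ^ 2 = 1 - u ^ 2 := by rw [sq_sqrt hx.le]; ring
  have hbu : b + u ≠ 0 := by positivity
  have hsqrt : HasDerivAt (fun y : ℝ => √(1 - y ^ 2)) (-(2 * x) / (2 * u)) x := by
    refine HasDerivAt.sqrt ?_ hx.ne'
    simpa using (hasDerivAt_pow 2 x).const_sub 1
  have hlin : HasDerivAt (fun y : ℝ => (b + 1) * y) (b + 1) x := by
    simpa using (hasDerivAt_id x).const_mul (b + 1)
  refine ((hlin.div (hsqrt.const_add b) hbu).sub
    (hasDerivAt_arcsin hx₀.ne' hx₁.ne)).congr_deriv ?_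
  have hnum : (b + 1) * x * (-(2 * x) / (2 * u)) = -((b + 1) * (1 - u ^ 2)) / u := by
    rw [← hu_sq]; field_simp
  rw [hnum]
  field_simp
  ring

theorem sqrt_one_sub_sq_mem_Ioo {c : ℝ} (hc : c ∈ Ioo 0 1) : √(1 - c ^ 2) ∈ Ioo 0 1 := by
  obtain ⟨hc₀, hc₁⟩ := hc
  refine ⟨sqrt_pos.2 (by nlinarith), ?_⟩
  rw [sqrt_lt' one_pos]
  nlinarith

theorem isMaxOn_arcsinGap (hb : 0 < b) (hc : b ^ 2 - b - 1 ∈ Ioo 0 1) :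
    IsMaxOn (arcsinGap b) (Icc 0 1) √(1 - (b ^ 2 - b - 1) ^ 2) := by
  set c := b ^ 2 - b - 1
  set d := √(1 - c ^ 2)
  obtain ⟨hd₀, hd₁⟩ := sqrt_one_sub_sq_mem_Ioo hc
  have hcd : √(1 - d ^ 2) = c := by
    rw [sq_sqrt (by nlinarith [hc.1, hc.2]), sub_sub_cancel, sqrt_sq hc.1.le]
  have hmono : StrictMonoOn (arcsinGap b) (Icc 0 d) := by
    refine strictMonoOn_of_deriv_pos (convex_Icc 0 d) (continuous_arcsinGap hb).continuousOn ?_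
    intro x hx
    rw [interior_Icc] at hx
    obtain ⟨hx₀, hxd⟩ := hx
    have hu_lt_one : √(1 - x ^ 2) < 1 := by rw [sqrt_lt' one_pos]; nlinarith
    have hc_lt_u : c < √(1 - x ^ 2) := hcd ▸ sqrt_lt_sqrt (by nlinarith) (by nlinarith)
    have hu : 0 < √(1 - x ^ 2) := hc.1.trans hc_lt_u
    rw [(hasDerivAt_arcsinGap hb (by linarith) (by linarith)).deriv]
    exact div_pos (mul_pos (by linarith) (by linarith)) (by positivity)
  have hanti : StrictAntiOn (arcsinGap b) (Icc d 1) := by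
    refine strictAntiOn_of_deriv_neg (convex_Icc d 1) (continuous_arcsinGap hb).continuousOn ?_
    intro x hx
    rw [interior_Icc] at hx
    obtain ⟨hdx, hx₁⟩ := hx
    have hx : 0 < 1 - x ^ 2 := by nlinarith
    have hu_lt_c : √(1 - x ^ 2) < c := hcd ▸ sqrt_lt_sqrt hx.le (by nlinarith)
    rw [(hasDerivAt_arcsinGap hb (by linarith) hx₁).deriv]
    refine div_neg_of_neg_of_pos (mul_neg_of_pos_of_neg ?_ ?_) (by positivity) <;>
      linarith [hc.2]
  rintro x ⟨hx₀, hx₁⟩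
  rcases le_total x d with hxd | hdx
  · exact hmono.monotoneOn ⟨hx₀, hxd⟩ ⟨hd₀.le, le_rfl⟩ hxd
  · exact hanti.antitoneOn ⟨le_rfl, hd₁.le⟩ ⟨hdx, hx₁⟩ hdx

end arcsinGap

theorem sq_sub_self_sub_one_two_div_pi_sub_two_mem_Ioo :
    (2 / (π - 2)) ^ 2 - 2 / (π - 2) - 1 ∈ Ioo 0 1 := by
  have ht₀ : 1 < π - 2 := by linarith [pi_gt_three]
  have ht₁ : π - 2 < 1.2 := by linarith [pi_lt_d2]
  have heq : (2 / (π - 2)) ^ 2 - 2 / (π - 2) - 1 =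
      (4 - 2 * (π - 2) - (π - 2) ^ 2) / (π - 2) ^ 2 := by
    field_simp
    ring
  rw [heq, mem_Ioo, div_pos_iff_of_pos_right (by positivity), div_lt_one (by positivity)]
  constructor <;> nlinarith

theorem h_attains_max_at_d₁ (b₁ d₁ : ℝ)
    (hb₁ : b₁ = 2 / (π - 2))
    (hd₁ : d₁ = Real.sqrt (-b₁ ^ 4 + 2 * b₁ ^ 3 + b₁ ^ 2 - 2 * b₁)) :
    0 < d₁ ∧ d₁ < 1 ∧
    ∀ x : ℝ, 0 ≤ x → x ≤ 1 →
      (b₁ + 1) * x / (b₁ + Real.sqrt (1 - x ^ 2)) - Real.arcsin x ≤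
        (b₁ + 1) * d₁ / (b₁ + Real.sqrt (1 - d₁ ^ 2)) - Real.arcsin d₁ := by
  have hb : 0 < b₁ := hb₁ ▸ div_pos two_pos (by linarith [pi_gt_three])
  have hc : b₁ ^ 2 - b₁ - 1 ∈ Ioo 0 1 :=
    hb₁ ▸ sq_sub_self_sub_one_two_div_pi_sub_two_mem_Ioo
  have hd : d₁ = √(1 - (b₁ ^ 2 - b₁ - 1) ^ 2) := by rw [hd₁]; ring_nf
  obtain ⟨hd₀, hd₁⟩ := hd ▸ sqrt_one_sub_sq_mem_Ioo hc
  exact ⟨hd₀, hd₁, fun x hx₀ hx₁ => hd ▸ isMaxOn_arcsinGap hb hc ⟨hx₀, hx₁⟩⟩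
end
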